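/- Let $p \geq 2$, $\delta \in [0,1]$ and define $G_{p,\delta}(x,y) = |y|^2[(|x|+|y|)^\delta(1+|x|+|y|)^{1-\delta}]^{p-2}$ for $x, y \in \mathbb{R}^d$. Then $G_{p,\delta}$ is convex in its second argument: for fixed $x$ and all $y_1, y_2 \in \mathbb{R}^d$, $t \in [0,1]$, $G_{p,\delta}(x, ty_1 + (1-t)y_2) \leq t\,G_{p,\delta}(x, y_1) + (1-t)\,G_{p,\delta}(x, y_2)$. -/

import Mathlib

/-- The weight function `G_{p,δ}(x,y) = |y|² [(|x|+|y|)^δ (1+|x|+|y|)^{1-δ}]^{p-2}`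
(equal to `0` when `|x|+|y| = 0`). -/
noncomputable def Gpd (p δ : ℝ) {d : ℕ} (x y : EuclideanSpace ℝ (Fin d)) : ℝ :=
  ‖y‖ ^ 2 * ((‖x‖ + ‖y‖) ^ δ * (1 + ‖x‖ + ‖y‖) ^ (1 - δ)) ^ (p - 2)

/-!
Splitting `|y|²` between the two factors, `G_{p,δ}(x, y) = φ_{a,α}(|y|) φ_{b,β}(|y|)` with
`φ_{c,γ}(s) = s (c + s)^γ`, `a = |x|`, `b = 1 + |x|`, `α = δ(p-2)`, `β = (1-δ)(p-2)`. Each `φ_{c,γ}` is nonnegative, increasing and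
convex on `[0, ∞)` (its derivative `(c + s)^γ (1 + γ s / (c + s))` is a product of increasing
nonnegative functions), so their product is too; composing with the convex function `|·|`
gives convexity in `y`.
-/

open Set Real

section MulAddRpow

variable {c γ : ℝ}

lemma mul_add_rpow_nonneg (hc : 0 ≤ c) {s : ℝ} (hs : s ∈ Ici 0) : 0 ≤ s * (c + s) ^ γ := by
  rw [mem_Ici] at hs
  positivity

lemma monotoneOn_mul_add_rpow (hc : 0 ≤ c) (hγ : 0 ≤ γ) :
    MonotoneOn (fun s : ℝ => s * (c + s) ^ γ) (Ici 0) :=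
  MonotoneOn.mul monotoneOn_id
    (fun _ hs _ _ hst => rpow_le_rpow (by linarith [mem_Ici.1 hs]) (by linarith) hγ)
    (fun _ hs => hs) (fun _ hs => rpow_nonneg (by linarith [mem_Ici.1 hs]) γ)

lemma monotoneOn_div_add (hc : 0 ≤ c) : MonotoneOn (fun s : ℝ => s / (c + s)) (Ioi 0) := by
  intro s hs t ht hst
  simp only [mem_Ioi] at hs ht
  rw [div_le_div_iff₀ (by linarith) (by linarith)]
  nlinarith

lemma hasDerivAt_mul_add_rpow {s : ℝ} (hs : 0 < c + s) :
    HasDerivAt (fun s : ℝ => s * (c + s) ^ γ) ((c + s) ^ γ * (1 + γ * (s / (c + s)))) s := by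
  have hpow : HasDerivAt (fun s : ℝ => (c + s) ^ γ) (γ * (c + s) ^ (γ - 1)) s := by
    simpa using ((hasDerivAt_id s).const_add c).rpow_const (p := γ) (Or.inl hs.ne')
  refine ((hasDerivAt_id' s).mul hpow).congr_deriv ?_
  rw [rpow_sub_one hs.ne']
  field_simp

lemma convexOn_mul_add_rpow (hc : 0 ≤ c) (hγ : 0 ≤ γ) :
    ConvexOn ℝ (Ici 0) (fun s : ℝ => s * (c + s) ^ γ) := by
  have hderiv : ∀ s ∈ Ioi (0 : ℝ),
      HasDerivAt (fun s : ℝ => s * (c + s) ^ γ) ((c + s) ^ γ * (1 + γ * (s / (c + s)))) s :=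
    fun s hs => hasDerivAt_mul_add_rpow (by linarith [mem_Ioi.1 hs])
  have hpow_mono : MonotoneOn (fun s : ℝ => (c + s) ^ γ) (Ioi 0) :=
    fun _ hs _ _ hst => rpow_le_rpow (by linarith [mem_Ioi.1 hs]) (by linarith) hγ
  have hfactor_mono : MonotoneOn (fun s : ℝ => 1 + γ * (s / (c + s))) (Ioi 0) :=
    fun _ hs _ ht hst => add_le_add_right (mul_le_mul_of_nonneg_left
      (monotoneOn_div_add hc hs ht hst) hγ) 1
  refine MonotoneOn.convexOn_of_deriv (convex_Ici 0) ?_ ?_ ?_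
  · exact continuousOn_id.mul fun _ _ =>
      ((continuousAt_const.add continuousAt_id).rpow_const (Or.inr hγ)).continuousWithinAt
  · rw [interior_Ici]
    exact fun s hs => (hderiv s hs).differentiableAt.differentiableWithinAt
  · rw [interior_Ici]
    have hpos : ∀ s ∈ Ioi (0 : ℝ), 0 ≤ c + s := fun s hs => by linarith [mem_Ioi.1 hs]
    refine (hpow_mono.mul hfactor_mono (fun s hs => rpow_nonneg (hpos s hs) γ) fun s hs => ?_).congr
      fun s hs => (hderiv s hs).deriv.symm
    exact add_nonneg zero_le_one (mul_nonneg hγ (div_nonneg (le_of_lt hs) (hpos s hs)))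

end MulAddRpow

section MulAddRpowProduct

variable {a b α β : ℝ}

lemma monotoneOn_mul_add_rpow_mul_mul_add_rpow (ha : 0 ≤ a) (hb : 0 ≤ b) (hα : 0 ≤ α)
    (hβ : 0 ≤ β) :
    MonotoneOn (fun s : ℝ => s * (a + s) ^ α * (s * (b + s) ^ β)) (Ici 0) :=
  (monotoneOn_mul_add_rpow ha hα).mul (monotoneOn_mul_add_rpow hb hβ)
    (fun _ => mul_add_rpow_nonneg ha) (fun _ => mul_add_rpow_nonneg hb)

lemma convexOn_mul_add_rpow_mul_mul_add_rpow (ha : 0 ≤ a) (hb : 0 ≤ b) (hα : 0 ≤ α)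
    (hβ : 0 ≤ β) :
    ConvexOn ℝ (Ici 0) (fun s : ℝ => s * (a + s) ^ α * (s * (b + s) ^ β)) :=
  (convexOn_mul_add_rpow ha hα).mul (convexOn_mul_add_rpow hb hβ)
    (fun _ => mul_add_rpow_nonneg ha) (fun _ => mul_add_rpow_nonneg hb)
    ((monotoneOn_mul_add_rpow ha hα).monovaryOn (monotoneOn_mul_add_rpow hb hβ))

end MulAddRpowProduct

lemma ConvexOn.comp_norm {E : Type*} [SeminormedAddCommGroup E] [NormedSpace ℝ E] {f : ℝ → ℝ}
    (hf : ConvexOn ℝ (Ici 0) f) (hf_mono : MonotoneOn f (Ici 0)) :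
    ConvexOn ℝ univ (fun y : E => f ‖y‖) := by
  refine ⟨convex_univ, fun y₁ _ y₂ _ s t hs ht hst => ?_⟩
  have hy₁ : ‖y₁‖ ∈ Ici (0 : ℝ) := norm_nonneg y₁
  have hy₂ : ‖y₂‖ ∈ Ici (0 : ℝ) := norm_nonneg y₂
  exact (hf_mono (norm_nonneg _) (hf.1 hy₁ hy₂ hs ht hst)
    ((convexOn_norm convex_univ).2 trivial trivial hs ht hst)).trans (hf.2 hy₁ hy₂ hs ht hst)

lemma Gpd_eq {p δ : ℝ} {d : ℕ} (x y : EuclideanSpace ℝ (Fin d)) :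
    Gpd p δ x y =
      ‖y‖ * (‖x‖ + ‖y‖) ^ (δ * (p - 2)) * (‖y‖ * (1 + ‖x‖ + ‖y‖) ^ ((1 - δ) * (p - 2))) := by
  have h₁ : 0 ≤ ‖x‖ + ‖y‖ := by positivity
  have h₂ : 0 ≤ 1 + ‖x‖ + ‖y‖ := by positivity
  rw [Gpd, mul_rpow (rpow_nonneg h₁ _) (rpow_nonneg h₂ _), ← rpow_mul h₁, ← rpow_mul h₂]
  ring

theorem Gpd_convex_second_argument (p δ : ℝ) (hp : 2 ≤ p) (hδ : δ ∈ Set.Icc (0:ℝ) 1)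
    (d : ℕ) (x y₁ y₂ : EuclideanSpace ℝ (Fin d)) (t : ℝ) (ht : t ∈ Set.Icc (0:ℝ) 1) :
    Gpd p δ x (t • y₁ + (1 - t) • y₂) ≤ t * Gpd p δ x y₁ + (1 - t) * Gpd p δ x y₂ := by
  obtain ⟨hδ₀, hδ₁⟩ := hδ
  have hα : 0 ≤ δ * (p - 2) := mul_nonneg hδ₀ (by linarith)
  have hβ : 0 ≤ (1 - δ) * (p - 2) := mul_nonneg (by linarith) (by linarith)
  have hb : 0 ≤ 1 + ‖x‖ := by positivity
  have hconv := (convexOn_mul_add_rpow_mul_mul_add_rpow (norm_nonneg x) hb hα hβ).comp_norm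
    (E := EuclideanSpace ℝ (Fin d))
    (monotoneOn_mul_add_rpow_mul_mul_add_rpow (norm_nonneg x) hb hα hβ)
  simpa only [Gpd_eq, smul_eq_mul] using
    hconv.2 trivial trivial ht.1 (sub_nonneg.2 ht.2) (add_sub_cancel t 1)
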